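/- In the polynomial ring H^G_{k⁺ⁱ}, for every α ≥ 0 the recursively defined dual elements slide across the inclusions as follows: (a) φ^G(x̄(k)_{j,α}) = ψ^G(x̄(₊ᵢk)_{j,α}) for every j ≠ i, i+1; (b) φ^G(x̄(k)_{i,α}) = ψ^G(x̄(₊ᵢk)_{i,α−1})·ξ + ψ^G(x̄(₊ᵢk)_{i,α}) and φ^G(x̄(k)_{i+1,α}) = Σ_{f=0}^{α} (−1)^f ψ^G(x̄(₊ᵢk)_{i+1,α−f})·ξ^f; (c) ψ^G(x̄(₊ᵢk)_{i,α}) = Σ_{f=0}^{α} (−1)^f φ^G(x̄(k)_{i,α−f})·ξ^f and ψ^G(x̄(₊ᵢk)_{i+1,α}) = φ^G(x̄(k)_{i+1,α−1})·ξ + φ^G(x̄(k)_{i+1,α}). -/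

import Mathlib

/-!
Equivariant cohomology rings of `n`-step partial flag varieties (polynomial rings),
following Khovanov–Lauda, Section 5.3 (Equivariant representation).
-/

open MvPolynomial Finset

noncomputable section

variable (𝕜 : Type) [Field 𝕜]

/-- The generator `x(k)_{j,α}` of the equivariant cohomology ring `H^G_k` (a polynomial
ring), with the conventions `x(k)_{j,0} = 1` and `x(k)_{j,α} = 0` out of range. -/
def xp (n : ℕ) (k : ℕ → ℕ) (j α : ℕ) : MvPolynomial (ℕ × ℕ) 𝕜 :=
  if α = 0 then 1 else if 1 ≤ j ∧ j ≤ n ∧ α ≤ k j - k (j - 1) then X (j, α) else 0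

/-- The dual element `x̄(k)_{j,α} ∈ H^G_k`, defined recursively by `x̄(k)_{j,0} = 1` and
`x̄(k)_{j,α} = -∑_{f=1}^{α} x(k)_{j,f} x̄(k)_{j,α-f}` for `α ≥ 1`. -/
def xbarG (n : ℕ) (k : ℕ → ℕ) (j : ℕ) : ℕ → MvPolynomial (ℕ × ℕ) 𝕜
  | 0 => 1
  | (α + 1) => - ∑ f ∈ Finset.range (α + 1), xp 𝕜 n k j (f + 1) * xbarG n k j (α - f)
  termination_by α => α
  decreasing_by exact Nat.lt_succ_of_le (Nat.sub_le α f)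

/-- The dual element with an integer index, with `x̄(k)_{j,α} = 0` for `α < 0`. -/
def xbarGZ (n : ℕ) (k : ℕ → ℕ) (j : ℕ) (α : ℤ) : MvPolynomial (ℕ × ℕ) 𝕜 :=
  if 0 ≤ α then xbarG 𝕜 n k j α.toNat else 0

/-- The sequence `₊ᵢk`, obtained from `k` by replacing `k i` with `k i + 1`. -/
def kup (k : ℕ → ℕ) (i : ℕ) : ℕ → ℕ := fun j => if j = i then k i + 1 else k j

/-- The generator `x_{j,α}` (for `j ≠ i + 1`) of `H^G_{k⁺ⁱ}`, with conventions. -/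
def yp (n : ℕ) (k : ℕ → ℕ) (i j α : ℕ) : MvPolynomial (ℕ × ℕ) 𝕜 :=
  if α = 0 then 1
  else if 1 ≤ j ∧ j ≤ n ∧ j ≠ i + 1 ∧ α ≤ k j - k (j - 1) then X (j, α) else 0

/-- The generator `x'_{i+1,α}` of `H^G_{k⁺ⁱ}`, with conventions. -/
def y'p (n : ℕ) (k : ℕ → ℕ) (i α : ℕ) : MvPolynomial (ℕ × ℕ) 𝕜 :=
  if α = 0 then 1 else if α ≤ k (i + 1) - k i - 1 then X (i + 1, α) else 0

/-- The degree `2` generator `ξ` of `H^G_{k⁺ⁱ}`. -/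
def xiG : MvPolynomial (ℕ × ℕ) 𝕜 := X (0, 1)

/-- `φ^G : H^G_k → H^G_{k⁺ⁱ}` is the `𝕜`-algebra homomorphism determined by
`φ^G(x(k)_{j,α}) = x_{j,α}` for `j ≠ i+1` and
`φ^G(x(k)_{i+1,α}) = ξ·x'_{i+1,α-1} + x'_{i+1,α}`. -/
def IsPhiG (n : ℕ) (k : ℕ → ℕ) (i : ℕ)
    (φ : MvPolynomial (ℕ × ℕ) 𝕜 →ₐ[𝕜] MvPolynomial (ℕ × ℕ) 𝕜) : Prop :=
  (∀ j α : ℕ, j ≠ i + 1 → φ (xp 𝕜 n k j α) = yp 𝕜 n k i j α) ∧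
  (∀ α : ℕ, 1 ≤ α → φ (xp 𝕜 n k (i + 1) α) =
    xiG 𝕜 * y'p 𝕜 n k i (α - 1) + y'p 𝕜 n k i α)

/-- `ψ^G : H^G_{₊ᵢk} → H^G_{k⁺ⁱ}` is the `𝕜`-algebra homomorphism determined by
`ψ^G(x(₊ᵢk)_{j,α}) = x_{j,α}` for `j ≠ i, i+1`, `ψ^G(x(₊ᵢk)_{i+1,α}) = x'_{i+1,α}`,
and `ψ^G(x(₊ᵢk)_{i,α}) = ξ·x_{i,α-1} + x_{i,α}`. -/
def IsPsiG (n : ℕ) (k : ℕ → ℕ) (i : ℕ)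
    (ψ : MvPolynomial (ℕ × ℕ) 𝕜 →ₐ[𝕜] MvPolynomial (ℕ × ℕ) 𝕜) : Prop :=
  (∀ j α : ℕ, j ≠ i → j ≠ i + 1 → ψ (xp 𝕜 n (kup k i) j α) = yp 𝕜 n k i j α) ∧
  (∀ α : ℕ, ψ (xp 𝕜 n (kup k i) (i + 1) α) = y'p 𝕜 n k i α) ∧
  (∀ α : ℕ, 1 ≤ α → ψ (xp 𝕜 n (kup k i) i α) =
    xiG 𝕜 * yp 𝕜 n k i i (α - 1) + yp 𝕜 n k i i α)

end

/-!
The dual elements `x̄(k)_{j,•}` are the coefficients of the inverse of the power series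
`∑ x(k)_{j,α} tᵅ`. After applying `φ^G` and `ψ^G`, the generator series of `k` and `₊ᵢk` agree
for `j ≠ i, i+1`, while the defining relations say that the series of `x(₊ᵢk)_{i,•}` is
`(1 + ξt)` times that of `x(k)_{i,•}`, and the series of `x(k)_{i+1,•}` is `(1 + ξt)` times that
of `x(₊ᵢk)_{i+1,•}`. Inverting, the dual series satisfy the same relations with the roles
reversed; since `(1 + ξt)⁻¹ = ∑ (-ξ)ᶠ tᶠ`, comparing coefficients gives the identities.
-/

namespace PowerSeries

variable {R : Type*} [CommRing R]

theorem coeff_mk_mul_mk (A B : ℕ → R) (α : ℕ) :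
    coeff α (mk A * mk B) = ∑ f ∈ Finset.range (α + 1), A f * B (α - f) := by
  rw [coeff_mul, Finset.Nat.sum_antidiagonal_eq_sum_range_succ_mk]
  simp only [coeff_mk]

theorem mk_mul_mk_eq_one_of_recursion {A D : ℕ → R} (hA : A 0 = 1) (hD : D 0 = 1)
    (hrec : ∀ α, D (α + 1) = -∑ f ∈ Finset.range (α + 1), A (f + 1) * D (α - f)) :
    mk A * mk D = 1 := by
  ext α
  rw [coeff_mk_mul_mk, coeff_one]
  cases α with
  | zero => simp [hA, hD]
  | succ α =>
    rw [Finset.sum_range_succ', hA, one_mul, Nat.sub_zero, hrec]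
    simp

theorem map_mk {S : Type*} [CommRing S] (F : R →+* S) (A : ℕ → R) :
    map F (mk A) = mk fun α => F (A α) := by
  ext α
  simp only [coeff_map, coeff_mk]

theorem coeff_succ_one_add_C_mul_X_mul (ξ : R) (P : R⟦X⟧) (α : ℕ) :
    coeff (α + 1) ((1 + C ξ * X) * P) = ξ * coeff α P + coeff (α + 1) P := by
  rw [add_mul, one_mul, map_add, mul_assoc, coeff_C_mul, coeff_succ_X_mul, add_comm]

theorem mk_eq_one_add_C_mul_X_mul {ξ : R} {A B : ℕ → R} (h0 : A 0 = B 0)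
    (hsucc : ∀ f, A (f + 1) = ξ * B f + B (f + 1)) :
    mk A = (1 + C ξ * X) * mk B := by
  ext α
  cases α with
  | zero => simp [h0]
  | succ α => rw [coeff_succ_one_add_C_mul_X_mul, coeff_mk, coeff_mk, coeff_mk, hsucc]

theorem mk_neg_pow_mul_one_add_C_mul_X (ξ : R) :
    mk (fun f => (-ξ) ^ f) * (1 + C ξ * X) = 1 := by
  have h := congrArg (rescale (-ξ)) (mk_one_mul_one_sub_eq_one R)
  simpa [rescale_X, rescale_mk, sub_eq_add_neg] using h

end PowerSeries

section DualElements

open PowerSeries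

variable {𝕜 : Type} [Field 𝕜] {S : Type*} [CommRing S] {H : Type*}
  [FunLike H (MvPolynomial (ℕ × ℕ) 𝕜) S] [RingHomClass H (MvPolynomial (ℕ × ℕ) 𝕜) S]

theorem mk_xp_mul_mk_xbarG (n : ℕ) (k : ℕ → ℕ) (j : ℕ) :
    PowerSeries.mk (xp 𝕜 n k j) * PowerSeries.mk (xbarG 𝕜 n k j) = 1 :=
  mk_mul_mk_eq_one_of_recursion (by simp [xp]) (by rw [xbarG]) fun α => by rw [xbarG]

theorem mk_map_xp_mul_mk_map_xbarG (F : H) (n : ℕ) (k : ℕ → ℕ) (j : ℕ) :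
    PowerSeries.mk (fun α => F (xp 𝕜 n k j α)) *
      PowerSeries.mk (fun α => F (xbarG 𝕜 n k j α)) = 1 := by
  simpa only [map_mk, map_mul, map_one, RingHom.coe_coe] using
    congrArg (PowerSeries.map (F : MvPolynomial (ℕ × ℕ) 𝕜 →+* S)) (mk_xp_mul_mk_xbarG n k j)

variable {F G : H} {ξ : S} {n : ℕ} {k k' : ℕ → ℕ} {j j' : ℕ}

theorem map_xbarG_eq_of_map_xp_eq (h : ∀ α, F (xp 𝕜 n k j α) = G (xp 𝕜 n k' j' α)) (α : ℕ) :
    F (xbarG 𝕜 n k j α) = G (xbarG 𝕜 n k' j' α) := by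
  have hinv := mk_map_xp_mul_mk_map_xbarG G n k' j'
  simp only [← h] at hinv
  have hseries := left_inv_eq_right_inv
    ((mul_comm _ _).trans (mk_map_xp_mul_mk_map_xbarG F n k j)) hinv
  simpa using congrArg (PowerSeries.coeff α) hseries

theorem mk_map_xbarG_eq_one_add_C_mul_X_mul
    (hrel : ∀ f, F (xp 𝕜 n k j (f + 1)) = ξ * G (xp 𝕜 n k' j' f) + G (xp 𝕜 n k' j' (f + 1))) :
    PowerSeries.mk (fun α => G (xbarG 𝕜 n k' j' α)) =
      (1 + PowerSeries.C ξ * PowerSeries.X) * PowerSeries.mk (fun α => F (xbarG 𝕜 n k j α)) := by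
  have hxp : PowerSeries.mk (fun α => F (xp 𝕜 n k j α)) =
      (1 + PowerSeries.C ξ * PowerSeries.X) * PowerSeries.mk (fun α => G (xp 𝕜 n k' j' α)) :=
    mk_eq_one_add_C_mul_X_mul (by simp [xp]) hrel
  refine left_inv_eq_right_inv ((mul_comm _ _).trans (mk_map_xp_mul_mk_map_xbarG G n k' j')) ?_
  rw [mul_left_comm, ← mul_assoc, ← hxp, mk_map_xp_mul_mk_map_xbarG]

theorem map_xbarG_eq_sum
    (hrel : ∀ f, F (xp 𝕜 n k j (f + 1)) = ξ * G (xp 𝕜 n k' j' f) + G (xp 𝕜 n k' j' (f + 1)))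
    (α : ℕ) :
    F (xbarG 𝕜 n k j α) =
      ∑ f ∈ Finset.range (α + 1), (-1 : S) ^ f * G (xbarG 𝕜 n k' j' (α - f)) * ξ ^ f := by
  have h : PowerSeries.mk (fun α => F (xbarG 𝕜 n k j α)) =
      PowerSeries.mk (fun f => (-ξ) ^ f) * PowerSeries.mk (fun α => G (xbarG 𝕜 n k' j' α)) := by
    rw [mk_map_xbarG_eq_one_add_C_mul_X_mul hrel, ← mul_assoc,
      mk_neg_pow_mul_one_add_C_mul_X, one_mul]
  rw [← coeff_mk α fun α => F (xbarG 𝕜 n k j α), h, coeff_mk_mul_mk]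
  refine Finset.sum_congr rfl fun f _ => ?_
  rw [neg_pow]
  ring

theorem map_xbarG_eq_xbarGZ_mul_add
    (hrel : ∀ f, F (xp 𝕜 n k j (f + 1)) = ξ * G (xp 𝕜 n k' j' f) + G (xp 𝕜 n k' j' (f + 1)))
    (α : ℕ) :
    G (xbarG 𝕜 n k' j' α) = F (xbarGZ 𝕜 n k j ((α : ℤ) - 1)) * ξ + F (xbarG 𝕜 n k j α) := by
  cases α with
  | zero => simp [xbarGZ, xbarG]
  | succ α =>
    have h := congrArg (PowerSeries.coeff (α + 1)) (mk_map_xbarG_eq_one_add_C_mul_X_mul hrel)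
    rw [coeff_succ_one_add_C_mul_X_mul] at h
    simpa [xbarGZ, mul_comm ξ] using h

end DualElements

section GStatements

variable (𝕜 : Type) [Field 𝕜]

theorem stmt16 (n i : ℕ) (k : ℕ → ℕ)
    (φG : MvPolynomial (ℕ × ℕ) 𝕜 →ₐ[𝕜] MvPolynomial (ℕ × ℕ) 𝕜) (hφ : IsPhiG 𝕜 n k i φG)
    (ψG : MvPolynomial (ℕ × ℕ) 𝕜 →ₐ[𝕜] MvPolynomial (ℕ × ℕ) 𝕜) (hψ : IsPsiG 𝕜 n k i ψG) :
    (∀ j α : ℕ, 1 ≤ j → j ≤ n → j ≠ i → j ≠ i + 1 →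
      φG (xbarG 𝕜 n k j α) = ψG (xbarG 𝕜 n (kup k i) j α)) ∧
    (∀ α : ℕ, φG (xbarG 𝕜 n k i α) =
      ψG (xbarGZ 𝕜 n (kup k i) i ((α : ℤ) - 1)) * xiG 𝕜 +
        ψG (xbarG 𝕜 n (kup k i) i α)) ∧
    (∀ α : ℕ, φG (xbarG 𝕜 n k (i + 1) α) =
      ∑ f ∈ Finset.range (α + 1),
        (-1 : MvPolynomial (ℕ × ℕ) 𝕜) ^ f *
          ψG (xbarG 𝕜 n (kup k i) (i + 1) (α - f)) * xiG 𝕜 ^ f) ∧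
    (∀ α : ℕ, ψG (xbarG 𝕜 n (kup k i) i α) =
      ∑ f ∈ Finset.range (α + 1),
        (-1 : MvPolynomial (ℕ × ℕ) 𝕜) ^ f *
          φG (xbarG 𝕜 n k i (α - f)) * xiG 𝕜 ^ f) ∧
    (∀ α : ℕ, ψG (xbarG 𝕜 n (kup k i) (i + 1) α) =
      φG (xbarGZ 𝕜 n k (i + 1) ((α : ℤ) - 1)) * xiG 𝕜 +
        φG (xbarG 𝕜 n k (i + 1) α)) := by
  obtain ⟨hφ_ne, hφ_succ⟩ := hφ
  obtain ⟨hψ_ne, hψ_succ, hψ_self⟩ := hψ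
  have hφ_self (f : ℕ) : φG (xp 𝕜 n k i f) = yp 𝕜 n k i i f := hφ_ne i f i.succ_ne_self.symm
  have hrel_self (f : ℕ) : ψG (xp 𝕜 n (kup k i) i (f + 1)) =
      xiG 𝕜 * φG (xp 𝕜 n k i f) + φG (xp 𝕜 n k i (f + 1)) := by
    rw [hψ_self (f + 1) f.succ_pos, hφ_self, hφ_self, Nat.add_sub_cancel]
  have hrel_succ (f : ℕ) : φG (xp 𝕜 n k (i + 1) (f + 1)) =
      xiG 𝕜 * ψG (xp 𝕜 n (kup k i) (i + 1) f) +
        ψG (xp 𝕜 n (kup k i) (i + 1) (f + 1)) := by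
    rw [hφ_succ (f + 1) f.succ_pos, hψ_succ, hψ_succ, Nat.add_sub_cancel]
  exact ⟨fun j α _ _ hji hji' => map_xbarG_eq_of_map_xp_eq
      (fun f => (hφ_ne j f hji').trans (hψ_ne j f hji hji').symm) α,
    map_xbarG_eq_xbarGZ_mul_add hrel_self, map_xbarG_eq_sum hrel_succ,
    map_xbarG_eq_sum hrel_self, map_xbarG_eq_xbarGZ_mul_add hrel_succ⟩

end GStatements
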